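/- arXiv:2110.07781 — 5 statements merged into one kernel-verified Lean document; each statement's English description precedes it below -/
import Mathlib

section
/- Let 2 ≤ p ≤ q be integers and let α = (α₁,…,α_q) be a tuple of nonzero complex numbers that contains an exponentially increasing subsequence of length p. Then every subset-sum representation β = (β₁,…,β_r) of α (with all β_j nonzero) has length r ≥ p / log₂(p). -/
/-!
Each term of the exponentially increasing subsequence exceeds in norm the sum of all earlier ones,
so its 2^p subset sums are pairwise distinct. A subset sum of these terms equals Σ c_j β_j, where
c_j counts the members of the subset whose representation uses β_j; for a proper subset c_j < p,
so 2^p - 1 ≤ p^r. Equality is impossible because p never divides 2^p - 1, hence 2^p ≤ p^r, which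
is the claim after taking log₂.
-/

open Finset

theorem Nat.not_dvd_two_pow_sub_one {n : ℕ} (hn : 1 < n) : ¬ n ∣ 2 ^ n - 1 := by
  intro h
  set s := n.minFac
  have hs : s.Prime := Nat.minFac_prime hn.ne'
  have := Fact.mk hs
  have h2n : (2 : ZMod s) ^ n = 1 := by
    have hzero := (ZMod.natCast_eq_zero_iff _ _).2 ((Nat.minFac_dvd n).trans h)
    push_cast [Nat.one_le_two_pow] at hzero
    exact sub_eq_zero.1 hzero
  have h2 : (2 : ZMod s) ≠ 0 := by
    rintro h0
    rw [h0, zero_pow (by omega)] at h2n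
    exact zero_ne_one h2n
  have hcop : n.Coprime (s - 1) := Nat.coprime_of_dvd fun k hk hkn hks => by
    have hsk : s ≤ k := Nat.minFac_le_of_dvd hk.two_le hkn
    have hks' : k ≤ s - 1 := Nat.le_of_dvd (Nat.sub_pos_of_lt hs.one_lt) hks
    have := hs.one_lt
    omega
  -- the order of 2 modulo the least prime factor of n divides both n and s - 1
  have hord : orderOf (2 : ZMod s) ∣ n.gcd (s - 1) :=
    Nat.dvd_gcd (orderOf_dvd_of_pow_eq_one h2n)
      (orderOf_dvd_of_pow_eq_one (ZMod.pow_card_sub_one_eq_one h2))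
  rw [hcop.gcd_eq_one, Nat.dvd_one, orderOf_eq_one_iff] at hord
  exact one_ne_zero (by linear_combination hord : (1 : ZMod s) = 0)

theorem Nat.two_pow_le_of_two_pow_sub_one_le {p r : ℕ} (hp : 1 < p) (h : 2 ^ p - 1 ≤ p ^ r) :
    2 ^ p ≤ p ^ r := by
  have hne : p ^ r ≠ 2 ^ p - 1 := by
    rcases Nat.eq_zero_or_pos r with rfl | hr
    · have : 2 ^ 2 ≤ 2 ^ p := Nat.pow_le_pow_right two_pos hp
      rw [pow_zero]
      omega
    · exact fun heq => Nat.not_dvd_two_pow_sub_one hp (heq ▸ dvd_pow_self p hr.ne')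
  have := Nat.one_le_two_pow (n := p)
  omega

theorem Real.div_logb_le_of_two_pow_le {p r : ℕ} (hp : 1 < p) (h : 2 ^ p ≤ p ^ r) :
    (p : ℝ) / Real.logb 2 p ≤ r := by
  have hlog : 0 < Real.logb 2 p := Real.logb_pos one_lt_two (by exact_mod_cast hp)
  have hle : Real.logb 2 ((2 : ℝ) ^ p) ≤ Real.logb 2 ((p : ℝ) ^ r) :=
    Real.logb_le_logb_of_le one_lt_two (by positivity) (by exact_mod_cast h)
  rw [Real.logb_pow, Real.logb_pow, Real.logb_self_eq_one one_lt_two, mul_one] at hle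
  rwa [div_le_iff₀ hlog]

theorem Fin.sum_Iio_lt_of_two_mul_le {n : ℕ} {a : Fin n → ℝ} (hpos : ∀ i, 0 < a i)
    (h : ∀ (j : ℕ) (hj : j + 1 < n), 2 * a ⟨j, Nat.lt_of_succ_lt hj⟩ ≤ a ⟨j + 1, hj⟩)
    (k : Fin n) : ∑ i ∈ Iio k, a i < a k := by
  obtain ⟨k, hk⟩ := k
  induction k with
  | zero =>
    have : Iio (⟨0, hk⟩ : Fin n) = ∅ := by ext i; simp [Fin.lt_def]
    simpa [this] using hpos _
  | succ k ih =>
    have : Iio (⟨k + 1, hk⟩ : Fin n) = insert ⟨k, by omega⟩ (Iio ⟨k, by omega⟩) := by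
      ext i; simp only [mem_Iio, mem_insert, Fin.lt_def, Fin.ext_iff]; omega
    rw [this, sum_insert (by simp)]
    linarith [ih (by omega), h k hk]

section Superincreasing

variable {ι E : Type*} [LinearOrder ι] [LocallyFiniteOrderBot ι] [SeminormedAddCommGroup E]
  {w : ι → E}

theorem Finset.sum_ne_sum_of_norm_sum_Iio_lt (hw : ∀ k, ∑ i ∈ Iio k, ‖w i‖ < ‖w k‖)
    {S T : Finset ι} (hST : Disjoint S T) {M : ι} (hM : M ∈ S) (hS : ∀ j ∈ S, j ≤ M)
    (hT : ∀ j ∈ T, j ≤ M) : ∑ i ∈ S, w i ≠ ∑ i ∈ T, w i := by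
  classical
  intro hsum
  have hsub : T ∪ S.erase M ⊆ Iio M := by
    intro j hj
    rw [mem_Iio]
    rcases mem_union.1 hj with hjT | hjS
    · exact (hT j hjT).lt_of_ne fun h => disjoint_left.1 hST hM (h ▸ hjT)
    · exact (hS j (mem_of_mem_erase hjS)).lt_of_ne (ne_of_mem_erase hjS)
  have hwM : w M = ∑ i ∈ T, w i - ∑ i ∈ S.erase M, w i := by
    rw [← hsum, ← add_sum_erase S w hM]
    abel
  have : ‖w M‖ ≤ ∑ i ∈ Iio M, ‖w i‖ := calc
    ‖w M‖ ≤ ∑ i ∈ T, ‖w i‖ + ∑ i ∈ S.erase M, ‖w i‖ :=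
      hwM ▸ (norm_sub_le _ _).trans (add_le_add (norm_sum_le _ _) (norm_sum_le _ _))
    _ = ∑ i ∈ T ∪ S.erase M, ‖w i‖ :=
      (sum_union (hST.symm.mono_right (erase_subset _ _))).symm
    _ ≤ ∑ i ∈ Iio M, ‖w i‖ := sum_le_sum_of_subset_of_nonneg hsub fun _ _ _ => norm_nonneg _
  exact (hw M).not_ge this

theorem Finset.sum_injective_of_norm_sum_Iio_lt (hw : ∀ k, ∑ i ∈ Iio k, ‖w i‖ < ‖w k‖) :
    Function.Injective fun A : Finset ι => ∑ i ∈ A, w i := by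
  classical
  intro A B hAB
  by_contra hne
  replace hAB := sum_sdiff_eq_sum_sdiff_iff.2 hAB
  have hdiff : (A \ B ∪ B \ A).Nonempty := by
    rw [nonempty_iff_ne_empty, Ne, union_eq_empty, sdiff_eq_empty_iff_subset,
      sdiff_eq_empty_iff_subset]
    exact fun h => hne (h.1.antisymm h.2)
  set M := (A \ B ∪ B \ A).max' hdiff
  have hAM : ∀ j ∈ A \ B, j ≤ M := fun j hj => le_max' _ j (mem_union_left _ hj)
  have hBM : ∀ j ∈ B \ A, j ≤ M := fun j hj => le_max' _ j (mem_union_right _ hj)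
  rcases mem_union.1 (max'_mem _ hdiff) with hM | hM
  · exact sum_ne_sum_of_norm_sum_Iio_lt hw disjoint_sdiff_sdiff hM hAM hBM hAB
  · exact sum_ne_sum_of_norm_sum_Iio_lt hw disjoint_sdiff_sdiff.symm hM hBM hAM hAB.symm

end Superincreasing

theorem Fintype.two_pow_card_sub_one_le_of_subset_sums {ι κ M : Type*} [Fintype ι] [Fintype κ]
    [AddCommMonoid M] {w : ι → M} {β : κ → M}
    (hw : Function.Injective fun A : Finset ι => ∑ i ∈ A, w i)
    (hβ : ∀ i, ∃ R : Finset κ, ∑ j ∈ R, β j = w i) :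
    2 ^ card ι - 1 ≤ card ι ^ card κ := by
  classical
  choose R hR using hβ
  set c : Finset ι → κ → ℕ := fun A j => #{i ∈ A | j ∈ R i}
  have hsum : ∀ A, ∑ i ∈ A, w i = ∑ j, c A j • β j := by
    intro A
    simp_rw [← hR]
    rw [sum_comm' (t' := univ) (s' := fun j => {i ∈ A | j ∈ R i}) (by simp)]
    simp only [sum_const, c]
  -- on proper subsets every coefficient is below card ι, which is what gives card ι ^ card κ
  have hc : Set.InjOn c (univ.erase univ : Finset (Finset ι)) :=
    fun A _ B _ hAB => hw (by simp only [hsum, hAB])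
  have hmaps : ∀ A ∈ (univ.erase univ : Finset (Finset ι)),
      c A ∈ piFinset fun _ : κ => range (card ι) := by
    intro A hA
    simp only [mem_piFinset, mem_range]
    exact fun j => (card_filter_le _ _).trans_lt ((card_lt_iff_ne_univ _).2 (ne_of_mem_erase hA))
  simpa [card_erase_of_mem] using card_le_card_of_injOn c hmaps hc

theorem moulton_refinement_general (p q r : ℕ) (hp : 2 ≤ p)
    (α : Fin q → ℂ) (hα : ∀ i, α i ≠ 0)
    (ι : Fin p → Fin q)
    (hexp : ∀ (j : ℕ) (hj : j + 1 < p),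
      2 * ‖α (ι ⟨j, Nat.lt_of_succ_lt hj⟩)‖ ≤ ‖α (ι ⟨j + 1, hj⟩)‖)
    (β : Fin r → ℂ)
    (hrep : ∀ i : Fin q, ∃ R : Finset (Fin r), ∑ j ∈ R, β j = α i) :
    (p : ℝ) / Real.logb 2 p ≤ (r : ℝ) := by
  have hgrowth : ∀ k, ∑ i ∈ Iio k, ‖α (ι i)‖ < ‖α (ι k)‖ :=
    Fin.sum_Iio_lt_of_two_mul_le (fun i => norm_pos_iff.2 (hα _)) hexp
  have hcount := Fintype.two_pow_card_sub_one_le_of_subset_sums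
    (sum_injective_of_norm_sum_Iio_lt hgrowth) (fun k => hrep (ι k))
  rw [Fintype.card_fin, Fintype.card_fin] at hcount
  exact Real.div_logb_le_of_two_pow_le hp (Nat.two_pow_le_of_two_pow_sub_one_le hp hcount)

/-- **Refinement of Moulton's theorem.**
Let `2 ≤ p ≤ q` and let `α = (α₁,…,α_q)` be a tuple of nonzero complex numbers containing
an exponentially increasing subsequence of length `p` (given by distinct indices `ι`).
Then every subset-sum representation `β = (β₁,…,β_r)` of `α` (with all `β j` nonzero)
has length `r ≥ p / log₂ p`. -/
theorem moulton_refinement (p q r : ℕ) (hp : 2 ≤ p) (hpq : p ≤ q)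
    (α : Fin q → ℂ) (hα : ∀ i, α i ≠ 0)
    (ι : Fin p → Fin q) (hι : Function.Injective ι)
    (hexp : ∀ (j : ℕ) (hj : j + 1 < p),
      2 * ‖α (ι ⟨j, Nat.lt_of_succ_lt hj⟩)‖ ≤ ‖α (ι ⟨j + 1, hj⟩)‖)
    (β : Fin r → ℂ) (hβ : ∀ j, β j ≠ 0)
    (hrep : ∀ i : Fin q, ∃ R : Finset (Fin r), ∑ j ∈ R, β j = α i) :
    (p : ℝ) / Real.logb 2 p ≤ (r : ℝ) :=
  moulton_refinement_general p q r hp α hα ι hexp β hrep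
end

section
/- Let n ≥ 1 and p ≥ 2 be integers and let ψ : 𝔽₂ⁿ → ℂ be a nonzero function. If there exist p distinct points x₁,…,x_p ∈ 𝔽₂ⁿ with ψ(x_j) ≠ 0 for all j and |ψ(x_{j+1})| ≥ 2·|ψ(x_j)| for all 1 ≤ j ≤ p−1, then χ(ψ) ≥ p / (4·log₂(p)). -/
open scoped BigOperators Classical

noncomputable section

namespace StabPaper

/-- The space `𝔽₂ⁿ` of length-`n` bitstrings. -/
abbrev F2 (n : ℕ) := Fin n → ZMod 2

/-- `A ⊆ 𝔽₂ⁿ` is a (nonempty) affine linear subspace. -/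
def IsAffineSubspace {n : ℕ} (A : Set (F2 n)) : Prop :=
  A.Nonempty ∧ ∀ x ∈ A, ∀ y ∈ A, ∀ z ∈ A, x + y + z ∈ A

/-- `l : 𝔽₂ⁿ → 𝔽₂` is a linear form. -/
def IsLinearForm {n : ℕ} (l : F2 n → ZMod 2) : Prop :=
  ∀ x y, l (x + y) = l x + l y

/-- `q : 𝔽₂ⁿ → 𝔽₂` is a quadratic form (polynomial of degree at most 2
with vanishing constant term). -/
def IsQuadraticForm {n : ℕ} (q : F2 n → ZMod 2) : Prop :=
  q 0 = 0 ∧ ∀ x y z, q (x + y + z) = q (x + y) + q (x + z) + q (y + z) + q x + q y + q z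

/-- A stabilizer state vector on `n` qubits. -/
def IsStabilizerState {n : ℕ} (σ : F2 n → ℂ) : Prop :=
  ∃ (A : Set (F2 n)) (l q : F2 n → ZMod 2),
    IsAffineSubspace A ∧ IsLinearForm l ∧ IsQuadraticForm q ∧
    ∀ x, σ x = if x ∈ A then Complex.I ^ (l x).val * (-1 : ℂ) ^ (q x).val else 0

/-- A real stabilizer state vector on `n` qubits (the case `l = 0`). -/
def IsRealStabilizerState {n : ℕ} (σ : F2 n → ℂ) : Prop :=
  ∃ (A : Set (F2 n)) (q : F2 n → ZMod 2),
    IsAffineSubspace A ∧ IsQuadraticForm q ∧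
    ∀ x, σ x = if x ∈ A then (-1 : ℂ) ^ (q x).val else 0

/-- The stabilizer rank: the least `r` such that `ψ` is a `ℂ`-linear combination of
`r` stabilizer state vectors. -/
def stabRank {n : ℕ} (ψ : F2 n → ℂ) : ℕ :=
  sInf {r : ℕ | ∃ (c : Fin r → ℂ) (σ : Fin r → (F2 n → ℂ)),
    (∀ i, IsStabilizerState (σ i)) ∧ ψ = ∑ i, c i • σ i}

/-- The real stabilizer rank: the least `r` such that `ψ` is a `ℂ`-linear combination of
`r` real stabilizer state vectors. -/
def realStabRank {n : ℕ} (ψ : F2 n → ℂ) : ℕ :=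
  sInf {r : ℕ | ∃ (c : Fin r → ℂ) (σ : Fin r → (F2 n → ℂ)),
    (∀ i, IsRealStabilizerState (σ i)) ∧ ψ = ∑ i, c i • σ i}

/-- The `n`-fold tensor power of a one-qubit vector `ψ : ℂ²`. -/
def tensorPow (ψ : ZMod 2 → ℂ) (n : ℕ) : F2 n → ℂ := fun x => ∏ i, ψ (x i)

/-- The Euclidean norm on `ℂ^{𝔽₂ⁿ}`. -/
def l2norm {n : ℕ} (φ : F2 n → ℂ) : ℝ := Real.sqrt (∑ x, ‖φ x‖ ^ 2)

/-- The δ-approximate stabilizer rank. -/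
def approxStabRank {n : ℕ} (δ : ℝ) (ψ : F2 n → ℂ) : ℕ :=
  sInf {r : ℕ | ∃ φ : F2 n → ℂ, φ ≠ 0 ∧
    l2norm (fun x => ((l2norm φ : ℝ) : ℂ)⁻¹ * φ x - ((l2norm ψ : ℝ) : ℂ)⁻¹ * ψ x) < δ ∧
    stabRank φ = r}

/-- The one-qubit vector `a·e₀ + b·e₁ ∈ ℂ²`. -/
def qubit (a b : ℂ) : ZMod 2 → ℂ := fun x => if x = 0 then a else b

/-- A nonzero `ψ ∈ ℂ²` is a one-qubit stabilizer state vector iff it is proportional to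
one of `e₀, e₁, e₀+e₁, e₀−e₁, e₀+i·e₁, e₀−i·e₁`. -/
def IsQubitStabVec (ψ : ZMod 2 → ℂ) : Prop :=
  ∃ c : ℂ, c ≠ 0 ∧ (ψ = c • qubit 1 0 ∨ ψ = c • qubit 0 1 ∨ ψ = c • qubit 1 1 ∨
    ψ = c • qubit 1 (-1) ∨ ψ = c • qubit 1 Complex.I ∨ ψ = c • qubit 1 (-Complex.I))

/-- The `n`-th generic stabilizer rank `χ_n`. -/
def genStabRank (n : ℕ) : ℕ :=
  sSup {r : ℕ | ∃ ψ : ZMod 2 → ℂ, ψ ≠ 0 ∧ stabRank (tensorPow ψ n) = r}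

/-- The `n`-th generic real stabilizer rank `χ_nℝ`. -/
def genRealStabRank (n : ℕ) : ℕ :=
  sSup {r : ℕ | ∃ ψ : ZMod 2 → ℂ, ψ ≠ 0 ∧ realStabRank (tensorPow ψ n) = r}

/-!
Every stabilizer state vector takes values in `{0, ±1, ±i}`. Given `ψ = ∑_{i<r} c_i σ_i`, the
`2r` integer linear forms `β ↦ Re, Im ∑_t β_t σ_i(x_t)` on `ℤ^p` have, by Siegel's lemma, a common
zero `β ≠ 0` with entries in `{-1, 0, 1}` as soon as `4 r log₂ p < p`; then `∑_t β_t ψ(x_t) = 0`.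
But when the moduli `|ψ(x_t)|` at least double at each step, `∑_{t<s} |ψ(x_t)| < |ψ(x_s)|`, so the
last nonzero term of such a sum dominates all the others and the sum cannot vanish.
-/

lemma sum_range_add_le_of_two_mul_le {a : ℕ → ℝ} {k : ℕ}
    (h : ∀ j, j < k → 2 * a j ≤ a (j + 1)) : ∑ j ∈ Finset.range k, a j + a 0 ≤ a k := by
  induction k with
  | zero => simp
  | succ k ih =>
    have := ih fun j hj => h j (by omega)
    rw [Finset.sum_range_succ]
    linarith [h k (by omega)]

lemma eq_zero_of_sum_range_mul_eq_zero {w : ℕ → ℂ} {β : ℕ → ℤ} {k : ℕ} (hw0 : w 0 ≠ 0)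
    (hw : ∀ j, j + 1 < k → 2 * ‖w j‖ ≤ ‖w (j + 1)‖) (hβ : ∀ j, |β j| ≤ 1)
    (hsum : ∑ j ∈ Finset.range k, (β j : ℂ) * w j = 0) : ∀ j < k, β j = 0 := by
  induction k with
  | zero => simp
  | succ k ih =>
    rw [Finset.sum_range_succ] at hsum
    have hβk : β k = 0 := by
      by_contra hk
      have h1 : (1 : ℝ) ≤ ‖(β k : ℂ)‖ := by
        simpa [Int.cast_abs] using (Int.cast_le (R := ℝ)).2 (Int.one_le_abs hk)
      have hbound := sum_range_add_le_of_two_mul_le (a := fun j => ‖w j‖) (k := k)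
        fun j hj => hw j (by omega)
      have hw0' : 0 < ‖w 0‖ := norm_pos_iff.2 hw0
      have : ‖(β k : ℂ) * w k‖ ≤ ∑ j ∈ Finset.range k, ‖w j‖ := by
        rw [← neg_eq_of_add_eq_zero_right hsum, norm_neg]
        refine (norm_sum_le _ _).trans (Finset.sum_le_sum fun j _ => ?_)
        rw [norm_mul]
        refine mul_le_of_le_one_left (norm_nonneg _) ?_
        simpa [Int.cast_abs] using (Int.cast_le (R := ℝ)).2 (hβ j)
      rw [norm_mul] at this
      nlinarith [norm_nonneg (w k)]
    rw [hβk, Int.cast_zero, zero_mul, add_zero] at hsum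
    intro j hj
    rcases Nat.lt_succ_iff_lt_or_eq.1 hj with hj | rfl
    · exact ih (fun j hj => hw j (by omega)) hsum j hj
    · exact hβk

lemma eq_zero_of_sum_mul_eq_zero {p : ℕ} {w : Fin p → ℂ} {β : Fin p → ℤ} (hw0 : ∀ j, w j ≠ 0)
    (hw : ∀ (j : ℕ) (hj : j + 1 < p), 2 * ‖w ⟨j, Nat.lt_of_succ_lt hj⟩‖ ≤ ‖w ⟨j + 1, hj⟩‖)
    (hβ : ∀ j, |β j| ≤ 1) (hsum : ∑ j, (β j : ℂ) * w j = 0) : β = 0 := by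
  rcases Nat.eq_zero_or_pos p with rfl | hp
  · exact Subsingleton.elim _ _
  let W : ℕ → ℂ := fun j => if h : j < p then w ⟨j, h⟩ else 0
  let B : ℕ → ℤ := fun j => if h : j < p then β ⟨j, h⟩ else 0
  have hB := eq_zero_of_sum_range_mul_eq_zero (w := W) (β := B) (k := p)
    (by simpa [W, hp] using hw0 ⟨0, hp⟩)
    (fun j hj => by simpa [W, hj, Nat.lt_of_succ_lt hj] using hw j hj)
    (fun j => by unfold B; split_ifs <;> simp [hβ])
    (by rw [← hsum, ← Fin.sum_univ_eq_sum_range]; simp [W, B])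
  funext j
  simpa [B] using hB j j.isLt

section

attribute [local instance] Matrix.seminormedAddCommGroup

open Matrix

open Real in
lemma rpow_div_sub_lt_two {n m : ℝ} (hn : 2 ≤ n) (hm : 0 ≤ m) (h : 2 * m * logb 2 n < n) :
    n ^ (m / (n - m)) < 2 := by
  have hL : 1 ≤ logb 2 n := by
    rw [le_logb_iff_rpow_le one_lt_two (by linarith)]; simpa using hn
  have hmL : m * logb 2 n < n - m := by nlinarith
  have hnm : 0 < n - m := by nlinarith
  calc n ^ (m / (n - m)) = (2 : ℝ) ^ (logb 2 n * (m / (n - m))) := by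
        rw [rpow_mul zero_le_two, rpow_logb two_pos (by norm_num) (by linarith)]
    _ < 2 ^ (1 : ℝ) := by
        rw [rpow_lt_rpow_left_iff one_lt_two, ← mul_div_assoc, div_lt_one hnm]; linarith
    _ = 2 := rpow_one 2

open Real Fintype in
lemma exists_ne_zero_mulVec_eq_zero_abs_le_one {ι κ : Type*} [Fintype ι] [Fintype κ]
    (A : Matrix ι κ ℤ) (hA : ∀ i j, |A i j| ≤ 1) (hι : 0 < card ι) (hκ : 2 ≤ card κ)
    (h : 2 * card ι * logb 2 (card κ) < card κ) :
    ∃ t : κ → ℤ, t ≠ 0 ∧ A *ᵥ t = 0 ∧ ∀ j, |t j| ≤ 1 := by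
  have hκR : (2 : ℝ) ≤ card κ := by exact_mod_cast hκ
  have hL : 1 ≤ logb 2 (card κ : ℝ) := by
    rw [le_logb_iff_rpow_le one_lt_two (by linarith)]; simpa using hκR
  have hικ : card ι < card κ := by
    have : (card ι : ℝ) < card κ := by nlinarith
    exact_mod_cast this
  have hnorm : max 1 ‖A‖ = 1 :=
    max_eq_left ((Matrix.norm_le_iff zero_le_one).2 fun i j => by
      simpa [Int.norm_eq_abs] using (Int.cast_le (R := ℝ)).2 (hA i j))
  obtain ⟨t, ht0, hAt, ht⟩ := Int.Matrix.exists_ne_zero_int_vec_norm_le A hικ hι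
  refine ⟨t, ht0, hAt, fun j => ?_⟩
  have hlt : |(t j : ℝ)| < 2 := by
    calc |(t j : ℝ)| = ‖t j‖ := (Int.norm_eq_abs _).symm
      _ ≤ ‖t‖ := norm_le_pi_norm t j
      _ ≤ _ := ht
      _ < 2 := by
          rw [hnorm, mul_one]
          exact rpow_div_sub_lt_two hκR (Nat.cast_nonneg _) h
  have : |t j| < 2 := by exact_mod_cast hlt
  omega

end

lemma IsStabilizerState.exists_int_add_int_mul_I {n : ℕ} {σ : F2 n → ℂ}
    (h : IsStabilizerState σ) (y : F2 n) :
    ∃ a b : ℤ, |a| ≤ 1 ∧ |b| ≤ 1 ∧ σ y = a + b * Complex.I := by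
  obtain ⟨A, l, q, -, -, -, hσ⟩ := h
  rw [hσ]
  split_ifs
  · have : (l y).val < 2 := ZMod.val_lt _
    interval_cases (l y).val
    · exact ⟨(-1) ^ (q y).val, 0, by simp, by simp, by simp⟩
    · exact ⟨0, (-1) ^ (q y).val, by simp, by simp, by simp [mul_comm]⟩
  · exact ⟨0, 0, by simp, by simp, by simp⟩

lemma isStabilizerState_ite_eq {n : ℕ} (y : F2 n) :
    IsStabilizerState fun z => if y = z then (1 : ℂ) else 0 := by
  refine ⟨{y}, 0, 0, ⟨⟨y, rfl⟩, ?_⟩, fun _ _ => by simp, ⟨rfl, fun _ _ _ => by simp⟩, ?_⟩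
  · intro a ha b hb c hc
    rw [Set.mem_singleton_iff] at ha hb hc ⊢
    subst ha hb hc
    funext i
    simp only [Pi.add_apply, CharTwo.add_self_eq_zero, zero_add]
  · intro z
    simp [eq_comm]

lemma exists_sum_smul_stabilizerState {n : ℕ} (ψ : F2 n → ℂ) :
    ∃ (c : Fin (stabRank ψ) → ℂ) (σ : Fin (stabRank ψ) → F2 n → ℂ),
      (∀ i, IsStabilizerState (σ i)) ∧ ψ = ∑ i, c i • σ i := by
  refine Nat.sInf_mem (s := {r : ℕ | ∃ (c : Fin r → ℂ) (σ : Fin r → F2 n → ℂ),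
    (∀ i, IsStabilizerState (σ i)) ∧ ψ = ∑ i, c i • σ i}) ?_
  let e := (Fintype.equivFin (F2 n)).symm
  refine ⟨_, fun i => ψ (e i), fun i z => if e i = z then 1 else 0,
    fun i => isStabilizerState_ite_eq (e i), ?_⟩
  rw [e.sum_comp (fun y => ψ y • fun z => if y = z then (1 : ℂ) else 0)]
  exact pi_eq_sum_univ ψ

lemma stabRank_pos {n : ℕ} {ψ : F2 n → ℂ} (hψ : ψ ≠ 0) : 0 < stabRank ψ := by
  obtain ⟨c, σ, -, hdec⟩ := exists_sum_smul_stabilizerState ψ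
  refine Nat.pos_of_ne_zero fun h0 => hψ ?_
  have : IsEmpty (Fin (stabRank ψ)) := by rw [h0]; infer_instance
  simp [hdec]

theorem stabRank_lower_bound_general (n p : ℕ) (hp : 2 ≤ p)
    (ψ : F2 n → ℂ)
    (x : Fin p → F2 n)
    (hne : ∀ j, ψ (x j) ≠ 0)
    (hexp : ∀ (j : ℕ) (hj : j + 1 < p),
      2 * ‖ψ (x ⟨j, Nat.lt_of_succ_lt hj⟩)‖ ≤
        ‖ψ (x ⟨j + 1, hj⟩)‖) :
    (p : ℝ) / (4 * Real.logb 2 p) ≤ (stabRank ψ : ℝ) := by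
  by_contra! hlt
  have hr : 0 < stabRank ψ := stabRank_pos fun h => hne ⟨0, by omega⟩ (by simp [h])
  obtain ⟨c, σ, hσ, hdec⟩ := exists_sum_smul_stabilizerState ψ
  choose a b ha hb hab using fun i t => (hσ i).exists_int_add_int_mul_I (x t)
  have hL : 0 < Real.logb 2 p := Real.logb_pos one_lt_two (by exact_mod_cast hp)
  obtain ⟨β, hβ0, hAβ, hβ⟩ := exists_ne_zero_mulVec_eq_zero_abs_le_one
    (Matrix.of (Sum.elim a b)) (by rintro (i | i) t <;> simp [ha, hb]) (by simp [hr])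
    (by simpa using hp) (by
      rw [lt_div_iff₀ (by positivity)] at hlt
      simp only [Fintype.card_sum, Fintype.card_fin, Nat.cast_add]
      linarith)
  have hσβ (i) : ∑ t, (β t : ℂ) * σ i (x t) = 0 := by
    have hre : ((∑ t, a i t * β t : ℤ) : ℂ) = 0 := by exact_mod_cast congrFun hAβ (Sum.inl i)
    have him : ((∑ t, b i t * β t : ℤ) : ℂ) = 0 := by exact_mod_cast congrFun hAβ (Sum.inr i)
    push_cast at hre him
    simp only [hab, mul_add, Finset.sum_add_distrib, ← mul_assoc, ← Finset.sum_mul]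
    simp only [mul_comm (β _ : ℂ), hre, him, zero_mul, add_zero]
  refine hβ0 (eq_zero_of_sum_mul_eq_zero hne hexp hβ ?_)
  simp only [hdec, Finset.sum_apply, Pi.smul_apply, smul_eq_mul, Finset.mul_sum]
  rw [Finset.sum_comm]
  simp only [mul_left_comm _ (c _), ← Finset.mul_sum, hσβ, mul_zero, Finset.sum_const_zero]

/-- **Stabilizer-rank lower bound from exponentially increasing coordinates.**
If the coordinates of a nonzero `ψ : 𝔽₂ⁿ → ℂ` contain an exponentially increasing
subsequence of length `p ≥ 2` (at `p` distinct points), then `χ(ψ) ≥ p / (4·log₂ p)`. -/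
theorem stabRank_lower_bound (n p : ℕ) (hn : 1 ≤ n) (hp : 2 ≤ p)
    (ψ : F2 n → ℂ) (hψ : ψ ≠ 0)
    (x : Fin p → F2 n) (hx : Function.Injective x)
    (hne : ∀ j, ψ (x j) ≠ 0)
    (hexp : ∀ (j : ℕ) (hj : j + 1 < p),
      2 * ‖ψ (x ⟨j, Nat.lt_of_succ_lt hj⟩)‖ ≤
        ‖ψ (x ⟨j + 1, hj⟩)‖) :
    (p : ℝ) / (4 * Real.logb 2 p) ≤ (stabRank ψ : ℝ) :=
  stabRank_lower_bound_general n p hp ψ x hne hexp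

end StabPaper
end
end

section
/- For every integer n ≥ 1, the explicit product state ψ_n satisfies χ(ψ_n) ≥ 2ⁿ / (4n). -/
open scoped BigOperators Classical

noncomputable section

namespace StabPaper

/-- The explicit product state `ψ_n = ⊗_{i=1}^n (e₀ + 2^{2^{i−1}} e₁)`,
i.e. `ψ_n(x) = 2^{Σ_{i=1}^n x_i·2^{i−1}}`. -/
def psiN (n : ℕ) : F2 n → ℂ :=
  fun x => (2 : ℂ) ^ (∑ i : Fin n, (x i).val * 2 ^ (i : ℕ))

/-!
Stabilizer vectors take values in `{0, ±1, ±i}`. If `ψ_n = ∑_{i<r} c_i σ_i`, then for every set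
`A ⊆ 𝔽₂ⁿ` the sum `∑_{x ∈ A} ψ_n(x)` is `∑_i c_i z_i` for Gaussian integers `z_i` whose real and
imaginary parts are bounded by `2ⁿ` in absolute value. As `ψ_n` takes exactly the values
`2⁰, …, 2^(2ⁿ-1)`, the `2^(2ⁿ)` subset sums are pairwise distinct by uniqueness of binary expansions,
so `2^(2ⁿ) ≤ (2·2ⁿ + 1)^(2r)`, which gives `2ⁿ ≤ 4nr`.
-/

open Finset

lemma two_pow_card_le_of_subsetSum_injective {ι κ : Type*} [Fintype ι] [Fintype κ]
    (u : ι → κ → ℤ) (hu : ∀ t k, |u t k| ≤ 1)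
    (hinj : Function.Injective fun A : Finset ι => ∑ t ∈ A, u t) :
    2 ^ Fintype.card ι ≤ (2 * Fintype.card ι + 1) ^ Fintype.card κ := by
  set N := Fintype.card ι
  have hbox : ∀ A : Finset ι, ∑ t ∈ A, u t ∈
      Fintype.piFinset fun _ : κ => Icc (-(N : ℤ)) N := by
    intro A
    rw [Fintype.mem_piFinset]
    intro k
    rw [Finset.sum_apply, mem_Icc, ← abs_le]
    calc |∑ t ∈ A, u t k| ≤ ∑ t ∈ A, |u t k| := abs_sum_le_sum_abs _ _
      _ ≤ #A • (1 : ℤ) := sum_le_card_nsmul _ _ _ fun t _ => hu t k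
      _ ≤ N := by simpa using card_le_univ A
  have hcard : #(Icc (-(N : ℤ)) N) = 2 * N + 1 := by rw [Int.card_Icc]; omega
  calc 2 ^ N = #(univ : Finset (Finset ι)) := by simp [N]
    _ ≤ #(Fintype.piFinset fun _ : κ => Icc (-(N : ℤ)) N) :=
      card_le_card_of_injOn _ (fun A _ => hbox A) hinj.injOn
    _ = (2 * N + 1) ^ Fintype.card κ := by simp [hcard]

lemma IsStabilizerState.exists_eq_int_add_int_mul_I {n : ℕ} {σ : F2 n → ℂ}
    (hσ : IsStabilizerState σ) (x : F2 n) :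
    ∃ a b : ℤ, |a| ≤ 1 ∧ |b| ≤ 1 ∧ σ x = a + b * Complex.I := by
  obtain ⟨A, l, q, -, -, -, hσx⟩ := hσ
  rw [hσx x]
  split_ifs
  · have hl := ZMod.val_lt (l x)
    have hq := ZMod.val_lt (q x)
    generalize (l x).val = a at hl ⊢
    generalize (q x).val = b at hq ⊢
    interval_cases a <;> interval_cases b
    · exact ⟨1, 0, by simp⟩
    · exact ⟨-1, 0, by simp⟩
    · exact ⟨0, 1, by simp⟩
    · exact ⟨0, -1, by simp⟩
  · exact ⟨0, 0, by simp⟩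

lemma psiN_eq_two_pow (n : ℕ) (x : F2 n) : psiN n x = 2 ^ (finFunctionFinEquiv x : ℕ) :=
  congrArg (2 ^ ·) (finFunctionFinEquiv_apply x).symm

lemma psiN_subsetSum_injective (n : ℕ) :
    Function.Injective fun A : Finset (F2 n) => ∑ x ∈ A, psiN n x := by
  let e : F2 n ↪ ℕ := finFunctionFinEquiv.toEmbedding.trans Fin.valEmbedding
  have hsum : ∀ A : Finset (F2 n), ∑ x ∈ A, psiN n x = ((∑ k ∈ A.map e, 2 ^ k : ℕ) : ℂ) := by
    intro A
    rw [sum_map]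
    push_cast
    exact sum_congr rfl fun x _ => psiN_eq_two_pow n x
  intro A B hAB
  simp only [hsum] at hAB
  exact map_injective e (geomSum_injective le_rfl (Nat.cast_injective hAB))

lemma isStabilizerState_single {n : ℕ} (y : F2 n) : IsStabilizerState (Pi.single y 1) := by
  refine ⟨{y}, 0, 0, ⟨Set.singleton_nonempty y, ?_⟩, fun _ _ => by simp, ⟨rfl, by simp⟩, ?_⟩
  · rintro _ rfl _ rfl _ rfl
    ext i
    simp only [Pi.add_apply, CharTwo.add_self_eq_zero, zero_add]
  · intro x
    by_cases hx : x = y <;> simp [hx]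

lemma exists_stabilizer_decomposition {n : ℕ} (ψ : F2 n → ℂ) :
    ∃ (r : ℕ) (c : Fin r → ℂ) (σ : Fin r → (F2 n → ℂ)),
      (∀ i, IsStabilizerState (σ i)) ∧ ψ = ∑ i, c i • σ i := by
  let e := Fintype.equivFin (F2 n)
  refine ⟨_, fun i => ψ (e.symm i), fun i => Pi.single (e.symm i) 1,
    fun i => isStabilizerState_single _, ?_⟩
  rw [e.symm.sum_comp (fun y => ψ y • Pi.single y (1 : ℂ))]
  ext x
  simp [Pi.single_apply]

lemma exists_stabilizer_decomposition_stabRank {n : ℕ} (ψ : F2 n → ℂ) :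
    ∃ (c : Fin (stabRank ψ) → ℂ) (σ : Fin (stabRank ψ) → (F2 n → ℂ)),
      (∀ i, IsStabilizerState (σ i)) ∧ ψ = ∑ i, c i • σ i :=
  Nat.sInf_mem (exists_stabilizer_decomposition ψ)

lemma two_pow_two_pow_le_of_stabilizer_decomposition {n r : ℕ} {ψ : F2 n → ℂ}
    (hψ : Function.Injective fun A : Finset (F2 n) => ∑ x ∈ A, ψ x)
    (c : Fin r → ℂ) (σ : Fin r → (F2 n → ℂ)) (hσ : ∀ i, IsStabilizerState (σ i))
    (hdec : ψ = ∑ i, c i • σ i) :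
    2 ^ 2 ^ n ≤ (2 * 2 ^ n + 1) ^ (2 * r) := by
  choose a b ha hb hab using fun x i => (hσ i).exists_eq_int_add_int_mul_I x
  let u : F2 n → Fin r ⊕ Fin r → ℤ := fun x => Sum.elim (a x) (b x)
  let Φ : (Fin r ⊕ Fin r → ℤ) → ℂ := fun v => ∑ i, c i * (v (.inl i) + v (.inr i) * Complex.I)
  have hΦ : ∀ A : Finset (F2 n), ∑ x ∈ A, ψ x = Φ (∑ x ∈ A, u x) := by
    intro A
    simp only [Φ, u, hdec, Finset.sum_apply, Pi.smul_apply, smul_eq_mul, hab, Sum.elim_inl,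
      Sum.elim_inr]
    push_cast
    rw [sum_comm]
    simp only [sum_mul, mul_sum, ← sum_add_distrib, mul_add]
  have hu : Function.Injective fun A : Finset (F2 n) => ∑ x ∈ A, u x :=
    .of_comp (f := Φ) (by convert hψ using 1; ext A; exact (hΦ A).symm)
  simpa [two_mul] using
    two_pow_card_le_of_subsetSum_injective u (fun x k => by cases k <;> simp [u, ha, hb]) hu

lemma two_pow_le_four_mul_of_two_pow_two_pow_le {n r : ℕ} (hn : 1 ≤ n)
    (h : 2 ^ 2 ^ n ≤ (2 * 2 ^ n + 1) ^ (2 * r)) : 2 ^ n ≤ 4 * n * r := by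
  have hbase : 2 * 2 ^ n + 1 ≤ 2 ^ (n + 2) := by
    have := n.one_le_two_pow
    rw [pow_succ, pow_succ]
    omega
  have : 2 ^ 2 ^ n ≤ 2 ^ ((n + 2) * (2 * r)) := by
    rw [pow_mul]
    exact h.trans (Nat.pow_le_pow_left hbase _)
  have hexp := (Nat.pow_le_pow_iff_right one_lt_two).mp this
  rcases hn.eq_or_lt with rfl | hn2
  · omega
  · nlinarith

/-- For every `n ≥ 1`, the explicit product state `ψ_n` satisfies `χ(ψ_n) ≥ 2ⁿ/(4n)`. -/
theorem psiN_stabRank_lower_bound (n : ℕ) (hn : 1 ≤ n) :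
    ((2 : ℝ) ^ n) / (4 * n) ≤ (stabRank (psiN n) : ℝ) := by
  obtain ⟨c, σ, hσ, hdec⟩ := exists_stabilizer_decomposition_stabRank (psiN n)
  have hbound : 2 ^ n ≤ 4 * n * stabRank (psiN n) :=
    two_pow_le_four_mul_of_two_pow_two_pow_le hn <|
      two_pow_two_pow_le_of_stabilizer_decomposition (psiN_subsetSum_injective n) c σ hσ hdec
  rw [div_le_iff₀ (by positivity), mul_comm]
  exact_mod_cast hbound

end StabPaper
end
end

section
/- Let α ∈ ℂ be nonzero and transcendental over ℚ. Then the two-qubit state ψ_α satisfies χ(ψ_α) = 2 and χ(ψ_α ⊗ ψ_α) = 4. -/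
open scoped BigOperators Classical

noncomputable section

namespace StabPaper

/-- The two-qubit state `ψ_α` with `ψ_α(00) = 1`, `ψ_α(01) = ψ_α(10) = α`, `ψ_α(11) = 0`. -/
def psiAlpha (α : ℂ) : F2 2 → ℂ := fun x =>
  if x 0 = 0 ∧ x 1 = 0 then 1 else if x 0 = 1 ∧ x 1 = 1 then 0 else α

/-- The tensor product of two two-qubit states, as a four-qubit state. -/
def tensor2 (φ ρ : F2 2 → ℂ) : F2 4 → ℂ := fun x =>
  φ (fun i => x (Fin.castAdd 2 i)) * ρ (fun j => x (Fin.natAdd 2 j))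

/-!
A stabilizer state is nonzero exactly on an affine subspace, and its values are algebraic.
Since `ψ_α = 𝟙_{00} + α 𝟙_{01,10}` and `00 + 01 + 10 = 11` lies outside the support of `ψ_α`,
`χ(ψ_α) = 2`. Expanding, `ψ_α ⊗ ψ_α = w₀ + α w₁ + α² w₂` with indicator vectors `wⱼ`, so four
stabilizer indicators suffice. Conversely, as `1, α, α²` are linearly independent over the
algebraic numbers, every `wⱼ` lies in any span of stabilizer states containing `ψ_α ⊗ ψ_α`.
With at most three of them that span is the span of the `wⱼ`; every vector in it takes equal values
at `0001, 0010, 0100` and vanishes at their sum `0111`, so each of the stabilizer states vanishes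
at `0001`, whereas `(ψ_α ⊗ ψ_α)(0001) = α`.
-/

open Submodule Set

theorem linearIndependent_pow_of_transcendental {F L : Type*} [Field F] [Field L] [Algebra F L]
    (K : IntermediateField F L) [Algebra.IsAlgebraic F K] {x : L} (hx : Transcendental F x) :
    LinearIndependent K (x ^ · : ℕ → L) := by
  have := (Polynomial.basisMonomials K).linearIndependent.map' (Polynomial.aeval x).toLinearMap
    (LinearMap.ker_eq_bot.mpr (transcendental_iff_injective.mp (hx.extendScalars K)))
  simpa [Function.comp_def] using this

theorem map_mem_span_of_sum_smul_mem_span {K L ι κ μ : Type*} [Field K] [Field L] [Algebra K L]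
    [Fintype ι] [Fintype μ] {b : μ → L} (hb : LinearIndependent K b)
    {s : κ → ι → K} {w : μ → ι → K}
    (h : ∑ j, b j • (algebraMap K L ∘ w j) ∈ span L (range fun i => algebraMap K L ∘ s i))
    (j : μ) : algebraMap K L ∘ w j ∈ span L (range fun i => algebraMap K L ∘ s i) := by
  suffices hw : w j ∈ span K (range s) by
    have := mem_map_of_mem (f := ((Algebra.ofId K L).compLeft ι).toLinearMap) hw
    rw [map_span, ← range_comp] at this
    exact span_le_restrictScalars K L _ this
  rw [← Subspace.forall_mem_dualAnnihilator_apply_eq_zero_iff]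
  intro φ hφ
  -- the `L`-linear extension of `φ`
  let Φ : (ι → L) →ₗ[L] L :=
    Fintype.linearCombination L fun x => algebraMap K L (φ fun y => if x = y then 1 else 0)
  have hΦ (v : ι → K) : Φ (algebraMap K L ∘ v) = algebraMap K L (φ v) := by
    rw [LinearMap.pi_apply_eq_sum_univ φ v]
    simp [Φ, Fintype.linearCombination_apply]
  have hker : span L (range fun i => algebraMap K L ∘ s i) ≤ LinearMap.ker Φ := by
    rw [span_le, range_subset_iff]
    intro i
    simp [hΦ, (mem_dualAnnihilator φ).mp hφ (s i) (subset_span ⟨i, rfl⟩)]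
  have hsum : ∑ j, φ (w j) • b j = 0 := by
    have := hker h
    rw [LinearMap.mem_ker, map_sum] at this
    simp only [map_smul, hΦ, smul_eq_mul] at this
    simpa only [Algebra.smul_def, mul_comm] using this
  exact Fintype.linearIndependent_iff.mp hb _ hsum j

theorem indicator_one_mem {F L ι : Type*} [Field F] [Field L] [Algebra F L]
    (K : IntermediateField F L) (S : Set ι) (u : ι) : S.indicator 1 u ∈ K := by
  by_cases hu : u ∈ S <;> simp [hu, one_mem, zero_mem]

namespace IsStabilizerState

variable {n : ℕ} {σ : F2 n → ℂ}

theorem apply_add_add_ne_zero (hσ : IsStabilizerState σ) {x y z : F2 n} (hx : σ x ≠ 0)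
    (hy : σ y ≠ 0) (hz : σ z ≠ 0) : σ (x + y + z) ≠ 0 := by
  obtain ⟨A, l, q, hA, -, -, hσ⟩ := hσ
  have mem_of_ne_zero {u : F2 n} (hu : σ u ≠ 0) : u ∈ A := by
    by_contra hu'
    exact hu (by rw [hσ, if_neg hu'])
  rw [hσ, if_pos (hA.2 _ (mem_of_ne_zero hx) _ (mem_of_ne_zero hy) _ (mem_of_ne_zero hz))]
  exact mul_ne_zero (pow_ne_zero _ Complex.I_ne_zero) (pow_ne_zero _ (neg_ne_zero.mpr one_ne_zero))

theorem apply_mem_algebraicClosure (hσ : IsStabilizerState σ) (x : F2 n) :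
    σ x ∈ algebraicClosure ℚ ℂ := by
  obtain ⟨A, l, q, -, -, -, hσ⟩ := hσ
  have hI : Complex.I ∈ algebraicClosure ℚ ℂ :=
    mem_algebraicClosure_iff.mpr Complex.isIntegral_rat_I.isAlgebraic
  rw [hσ]
  split_ifs
  · exact mul_mem (pow_mem hI _) (pow_mem (neg_mem (one_mem _)) _)
  · exact zero_mem _

end IsStabilizerState

theorem isStabilizerState_indicator {n : ℕ} {A : Set (F2 n)} (hA : IsAffineSubspace A) :
    IsStabilizerState (A.indicator 1) :=
  ⟨A, 0, 0, hA, fun _ _ => by simp, ⟨rfl, fun _ _ _ => by simp⟩, fun x => by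
    simp [Set.indicator_apply]⟩

theorem isStabilizerState_tensor2_indicator {S T : Set (F2 2)} (hS : IsAffineSubspace S)
    (hT : IsAffineSubspace T) : IsStabilizerState (tensor2 (S.indicator 1) (T.indicator 1)) := by
  have hprod : tensor2 (S.indicator 1) (T.indicator 1) = {x : F2 4 |
      (fun i => x (Fin.castAdd 2 i)) ∈ S ∧ (fun j => x (Fin.natAdd 2 j)) ∈ T}.indicator 1 := by
    funext x
    simp only [tensor2, Set.indicator_apply, Set.mem_ofPred_eq, Pi.one_apply]
    split_ifs <;> simp_all
  rw [hprod]
  refine isStabilizerState_indicator ⟨?_, ?_⟩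
  · obtain ⟨⟨u, hu⟩, ⟨v, hv⟩⟩ := And.intro hS.1 hT.1
    refine ⟨Fin.append u v, ?_, ?_⟩
    · simpa only [Fin.append_left] using hu
    · simpa only [Fin.append_right] using hv
  · rintro x ⟨hx, hx'⟩ y ⟨hy, hy'⟩ z ⟨hz, hz'⟩
    exact ⟨hS.2 _ hx _ hy _ hz, hT.2 _ hx' _ hy' _ hz'⟩

theorem stabRank_eq {n r : ℕ} {ψ : F2 n → ℂ} (c : Fin r → ℂ)
    (σ : Fin r → F2 n → ℂ) (hσ : ∀ i, IsStabilizerState (σ i)) (hψ : ψ = ∑ i, c i • σ i)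
    (hmin : ∀ k (τ : Fin k → F2 n → ℂ), (∀ i, IsStabilizerState (τ i)) →
      ψ ∈ span ℂ (range τ) → r ≤ k) :
    stabRank ψ = r :=
  le_antisymm (Nat.sInf_le ⟨c, σ, hσ, hψ⟩) <| le_csInf ⟨r, c, σ, hσ, hψ⟩
    fun k ⟨d, τ, hτ, hψ'⟩ =>
      hmin k τ hτ ((mem_span_range_iff_exists_fun ℂ).mpr ⟨d, hψ'.symm⟩)

def oddParity : Set (F2 2) := {u | u 0 + u 1 = 1}

theorem isAffineSubspace_singleton_zero {n : ℕ} : IsAffineSubspace ({0} : Set (F2 n)) :=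
  ⟨singleton_nonempty 0, by rintro _ rfl _ rfl _ rfl; simp⟩

theorem isAffineSubspace_oddParity : IsAffineSubspace oddParity := by
  refine ⟨⟨![0, 1], rfl⟩, fun x hx y hy z hz => ?_⟩
  calc (x + y + z) 0 + (x + y + z) 1 = (x 0 + x 1) + (y 0 + y 1) + (z 0 + z 1) := by
        simp only [Pi.add_apply]; ring
    _ = 1 := by rw [hx, hy, hz]; decide

theorem psiAlpha_eq (α : ℂ) :
    psiAlpha α = ({0} : Set (F2 2)).indicator 1 + α • oddParity.indicator 1 := by
  funext u
  obtain ⟨a, b, rfl⟩ : ∃ a b : ZMod 2, u = ![a, b] :=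
    ⟨u 0, u 1, by ext i; fin_cases i <;> rfl⟩
  fin_cases a <;> fin_cases b <;> simp +decide [psiAlpha, oddParity, Pi.single_apply]

theorem stabRank_psiAlpha {α : ℂ} (hα : α ≠ 0) : stabRank (psiAlpha α) = 2 := by
  refine stabRank_eq ![1, α] ![({0} : Set (F2 2)).indicator 1, oddParity.indicator 1] ?_ ?_ ?_
  · intro i
    fin_cases i
    exacts [isStabilizerState_indicator isAffineSubspace_singleton_zero,
      isStabilizerState_indicator isAffineSubspace_oddParity]
  · simp [psiAlpha_eq]
  · intro k τ hτ hψ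
    by_contra! hk
    interval_cases k
    · have h00 := congrFun (by simpa using hψ : psiAlpha α = 0) ![0, 0]
      simp [psiAlpha] at h00
    · obtain ⟨a, ha⟩ := mem_span_singleton.mp (by simpa [range_unique] using hψ)
      have ne_zero {u : F2 2} (hu : psiAlpha α u ≠ 0) : τ 0 u ≠ 0 :=
        right_ne_zero_of_mul (by simpa [← ha] using hu)
      have h11 : τ 0 ![1, 1] ≠ 0 := by
        have := (hτ 0).apply_add_add_ne_zero (ne_zero (u := ![0, 1]) (by simpa [psiAlpha]))
          (ne_zero (u := ![1, 0]) (by simpa [psiAlpha]))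
          (ne_zero (u := ![0, 0]) (by simp [psiAlpha]))
        rwa [show (![0, 1] + ![1, 0] + ![0, 0] : F2 2) = ![1, 1] by decide] at this
      have ha0 : a ≠ 0 := by
        rintro rfl
        simpa [psiAlpha] using congrFun ha ![0, 0]
      exact mul_ne_zero ha0 h11 (by simpa [psiAlpha] using congrFun ha ![1, 1])

def tensorLayer : Fin 3 → F2 4 → ℂ :=
  ![tensor2 (({0} : Set (F2 2)).indicator 1) (({0} : Set (F2 2)).indicator 1),
    tensor2 (({0} : Set (F2 2)).indicator 1) (oddParity.indicator 1) +
      tensor2 (oddParity.indicator 1) (({0} : Set (F2 2)).indicator 1),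
    tensor2 (oddParity.indicator 1) (oddParity.indicator 1)]

theorem tensor2_psiAlpha (α : ℂ) :
    tensor2 (psiAlpha α) (psiAlpha α) = ∑ j : Fin 3, α ^ (j : ℕ) • tensorLayer j := by
  funext x
  simp only [tensor2, tensorLayer, psiAlpha_eq, Fin.sum_univ_three, Finset.sum_apply,
    Pi.add_apply, Pi.smul_apply, smul_eq_mul, Matrix.cons_val, Fin.val_zero, Fin.val_one,
    Fin.val_two]
  ring

theorem linearIndependent_tensorLayer : LinearIndependent ℂ tensorLayer := by
  rw [Fintype.linearIndependent_iff]
  intro c hc j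
  fin_cases j
  · simpa +decide [Fin.sum_univ_three, tensorLayer, tensor2, oddParity, Pi.single_apply]
      using congrFun hc ![0, 0, 0, 0]
  · simpa +decide [Fin.sum_univ_three, tensorLayer, tensor2, oddParity, Pi.single_apply]
      using congrFun hc ![0, 0, 0, 1]
  · simpa +decide [Fin.sum_univ_three, tensorLayer, tensor2, oddParity, Pi.single_apply]
      using congrFun hc ![0, 1, 0, 1]

theorem apply_eq_of_mem_span_tensorLayer {v : F2 4 → ℂ}
    (hv : v ∈ span ℂ (range tensorLayer)) :
    v ![0, 0, 1, 0] = v ![0, 0, 0, 1] ∧ v ![0, 1, 0, 0] = v ![0, 0, 0, 1] ∧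
      v ![0, 1, 1, 1] = 0 := by
  obtain ⟨c, rfl⟩ := (mem_span_range_iff_exists_fun ℂ).mp hv
  simp +decide [Fin.sum_univ_three, tensorLayer, tensor2, oddParity, Pi.single_apply]

theorem tensorLayer_mem_span {α : ℂ} (ht : Transcendental ℚ α) {k : ℕ}
    {τ : Fin k → F2 4 → ℂ} (hτ : ∀ i, IsStabilizerState (τ i))
    (hψ : tensor2 (psiAlpha α) (psiAlpha α) ∈ span ℂ (range τ)) (j : Fin 3) :
    tensorLayer j ∈ span ℂ (range τ) := by
  have hb : LinearIndependent (algebraicClosure ℚ ℂ) fun j : Fin 3 => α ^ (j : ℕ) :=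
    (linearIndependent_pow_of_transcendental _ ht).comp _ Fin.val_injective
  have hw (j : Fin 3) (x : F2 4) : tensorLayer j x ∈ algebraicClosure ℚ ℂ := by
    fin_cases j <;> simp only [tensorLayer, tensor2, Fin.zero_eta, Fin.mk_one, Fin.reduceFinMk,
      Matrix.cons_val, Pi.add_apply] <;>
      apply_rules [add_mem, mul_mem, indicator_one_mem]
  exact map_mem_span_of_sum_smul_mem_span hb
    (s := fun i x => ⟨τ i x, (hτ i).apply_mem_algebraicClosure x⟩)
    (w := fun j x => ⟨tensorLayer j x, hw j x⟩) (by rwa [tensor2_psiAlpha] at hψ) j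

theorem four_le_of_tensor2_psiAlpha_mem_span {α : ℂ} (hα : α ≠ 0)
    (ht : Transcendental ℚ α) {k : ℕ} {τ : Fin k → F2 4 → ℂ} (hτ : ∀ i, IsStabilizerState (τ i))
    (hψ : tensor2 (psiAlpha α) (psiAlpha α) ∈ span ℂ (range τ)) : 4 ≤ k := by
  by_contra! hk
  have hle : span ℂ (range tensorLayer) ≤ span ℂ (range τ) :=
    span_le.mpr (range_subset_iff.mpr (tensorLayer_mem_span ht hτ hψ))
  have heq : span ℂ (range tensorLayer) = span ℂ (range τ) := by
    refine eq_of_le_of_finrank_le hle ?_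
    rw [finrank_span_eq_card linearIndependent_tensorLayer]
    exact (finrank_range_le_card τ).trans (by simp; omega)
  have hτ_apply (i : Fin k) : τ i ![0, 0, 0, 1] = 0 := by
    have hi : τ i ∈ span ℂ (range tensorLayer) := heq ▸ subset_span ⟨i, rfl⟩
    obtain ⟨h2, h3, h7⟩ := apply_eq_of_mem_span_tensorLayer hi
    by_contra h1
    refine (hτ i).apply_add_add_ne_zero h1 (h2 ▸ h1) (h3 ▸ h1) ?_
    rwa [show (![0, 0, 0, 1] + ![0, 0, 1, 0] + ![0, 1, 0, 0] : F2 4) = ![0, 1, 1, 1] by decide]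
  obtain ⟨c, hc⟩ := (mem_span_range_iff_exists_fun ℂ).mp hψ
  exact hα (by simpa [hτ_apply, tensor2, psiAlpha] using (congrFun hc ![0, 0, 0, 1]).symm)

theorem stabRank_tensor2_psiAlpha {α : ℂ} (hα : α ≠ 0) (ht : Transcendental ℚ α) :
    stabRank (tensor2 (psiAlpha α) (psiAlpha α)) = 4 := by
  have h0 := isAffineSubspace_singleton_zero (n := 2)
  have h1 := isAffineSubspace_oddParity
  refine stabRank_eq ![1, α, α, α ^ 2]
    ![tensor2 (({0} : Set (F2 2)).indicator 1) (({0} : Set (F2 2)).indicator 1),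
      tensor2 (({0} : Set (F2 2)).indicator 1) (oddParity.indicator 1),
      tensor2 (oddParity.indicator 1) (({0} : Set (F2 2)).indicator 1),
      tensor2 (oddParity.indicator 1) (oddParity.indicator 1)] ?_ ?_
    fun k τ hτ hψ => four_le_of_tensor2_psiAlpha_mem_span hα ht hτ hψ
  · intro i
    fin_cases i
    exacts [isStabilizerState_tensor2_indicator h0 h0, isStabilizerState_tensor2_indicator h0 h1,
      isStabilizerState_tensor2_indicator h1 h0, isStabilizerState_tensor2_indicator h1 h1]
  · rw [tensor2_psiAlpha]
    simp only [Fin.sum_univ_three, Fin.sum_univ_four, tensorLayer, Matrix.cons_val, Fin.val_zero,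
      Fin.val_one, Fin.val_two]
    module

/-- For `α ≠ 0` transcendental over `ℚ`, `χ(ψ_α) = 2` and `χ(ψ_α ⊗ ψ_α) = 4`. -/
theorem psiAlpha_multiplicative (α : ℂ) (hα : α ≠ 0) (ht : Transcendental ℚ α) :
    stabRank (psiAlpha α) = 2 ∧ stabRank (tensor2 (psiAlpha α) (psiAlpha α)) = 4 :=
  ⟨stabRank_psiAlpha hα, stabRank_tensor2_psiAlpha hα ht⟩

end StabPaper
end
end

section
/- For every positive integer n, the set of one-dimensional subspaces ℂ·ψ of ℂ² (ψ nonzero) for which χ(ψ^{⊗n}) < χ_n is finite, and likewise the set of one-dimensional subspaces ℂ·ψ of ℂ² for which χℝ(ψ^{⊗n}) < χ_nℝ is finite. Equivalently, all but finitely many projective qubit states maximize χ(ψ^{⊗n}), and all but finitely many maximize χℝ(ψ^{⊗n}). -/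
open scoped BigOperators Classical

noncomputable section

namespace StabPaper

/-!
The (real) stabilizer states form a finite set `S` spanning `ℂ^{𝔽₂ⁿ}`. A vector of rank `< g`
lies in the span of fewer than `g` elements of `S`, and there are only finitely many such spans
`W`. If `W` misses `φ^{⊗n}` for a maximizer `φ`, it contains `ψ^{⊗n}` for at most `n + 1` lines
`ℂ·ψ`: `ψ^{⊗n}(x) = ψ₀^{n-|x|} ψ₁^{|x|}` depends only on the Hamming weight `|x|`, and the
tensor powers of `n + 1` vectors `e₀ + t e₁` with distinct `t` form an invertible Vandermonde
system in these coordinates, so they span every tensor power.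
-/

section RankWrt

variable (R : Type*) {M : Type*} [Semiring R] [AddCommMonoid M] [Module R M]

-- `stabRank` and `realStabRank` are `rankWrt ℂ` of the (real) stabilizer states by definition.
-- Junk value: `rankWrt R S v = sInf ∅ = 0` when `v ∉ Submodule.span R S`.
def rankWrt (S : Set M) (v : M) : ℕ :=
  sInf {r : ℕ | ∃ (c : Fin r → R) (σ : Fin r → M), (∀ i, σ i ∈ S) ∧ v = ∑ i, c i • σ i}

variable {R}

theorem rankWrt_le_card_of_mem_span {S : Set M} {v : M} (T : Finset M) (hTS : ↑T ⊆ S)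
    (hv : v ∈ Submodule.span R (T : Set M)) : rankWrt R S v ≤ T.card := by
  let σ : Fin T.card → M := Subtype.val ∘ T.equivFin.symm
  have hσ : Set.range σ = T := by simp [σ, Set.range_comp]
  rw [← hσ, Submodule.mem_span_range_iff_exists_fun] at hv
  obtain ⟨c, hc⟩ := hv
  exact Nat.sInf_le ⟨c, σ, fun i => hTS (T.equivFin.symm i).2, hc.symm⟩

theorem exists_finset_card_le_rankWrt {S : Set M} {v : M} (hv : v ∈ Submodule.span R S) :
    ∃ T : Finset M, ↑T ⊆ S ∧ T.card ≤ rankWrt R S v ∧ v ∈ Submodule.span R (T : Set M) := by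
  have hne : {r : ℕ | ∃ (c : Fin r → R) (σ : Fin r → M),
      (∀ i, σ i ∈ S) ∧ v = ∑ i, c i • σ i}.Nonempty := by
    obtain ⟨r, c, σ, hσ⟩ := Submodule.mem_span_set'.mp hv
    exact ⟨r, c, fun i => σ i, fun i => (σ i).2, hσ.symm⟩
  suffices ∀ r ∈ {r : ℕ | ∃ (c : Fin r → R) (σ : Fin r → M),
      (∀ i, σ i ∈ S) ∧ v = ∑ i, c i • σ i},
      ∃ T : Finset M, ↑T ⊆ S ∧ T.card ≤ r ∧ v ∈ Submodule.span R (T : Set M) from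
    this _ (Nat.sInf_mem hne)
  rintro r ⟨c, σ, hσS, rfl⟩
  refine ⟨Finset.univ.image σ, by simpa [Set.range_subset_iff] using hσS,
    Finset.card_image_le.trans (Finset.card_fin _).le, ?_⟩
  exact Submodule.sum_mem _ fun i _ =>
    Submodule.smul_mem _ _ (Submodule.subset_span (by simp))

end RankWrt

section TensorPow

variable {n : ℕ}

lemma eq_qubit (ψ : ZMod 2 → ℂ) : ψ = qubit (ψ 0) (ψ 1) := by
  funext x
  fin_cases x <;> rfl

lemma smul_qubit (c a b : ℂ) : c • qubit a b = qubit (c * a) (c * b) := by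
  funext x
  simp only [qubit, Pi.smul_apply, smul_eq_mul]
  split_ifs <;> rfl

lemma exists_smul_qubit {ψ : ZMod 2 → ℂ} (hψ : ψ ≠ 0) :
    ∃ c : ℂ, c ≠ 0 ∧ (ψ = c • qubit 0 1 ∨ ∃ t, ψ = c • qubit 1 t) := by
  rw [eq_qubit ψ] at hψ ⊢
  by_cases h0 : ψ 0 = 0
  · have h1 : ψ 1 ≠ 0 := fun h1 => hψ (by funext x; simp [h0, h1, qubit])
    exact ⟨ψ 1, h1, .inl (by rw [smul_qubit, h0]; simp)⟩
  · exact ⟨ψ 0, h0, .inr ⟨ψ 1 / ψ 0, by rw [smul_qubit]; field_simp⟩⟩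

lemma tensorPow_smul (c : ℂ) (ψ : ZMod 2 → ℂ) : tensorPow (c • ψ) n = c ^ n • tensorPow ψ n := by
  funext x
  simp [tensorPow, Finset.prod_mul_distrib]

lemma tensorPow_apply_eq_pow_hammingNorm (ψ : ZMod 2 → ℂ) (x : F2 n) :
    tensorPow ψ n x = ψ 0 ^ (n - hammingNorm x) * ψ 1 ^ hammingNorm x := by
  have hψ : ∀ i, ψ (x i) = if x i ≠ 0 then ψ 1 else ψ 0 := fun i => by
    generalize x i = v
    fin_cases v <;> rfl
  have hcard : (Finset.univ.filter fun i => ¬ x i ≠ 0).card = n - hammingNorm x := by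
    rw [Finset.filter_not, Finset.card_univ_sdiff, Fintype.card_fin]
    rfl
  simp only [tensorPow, hψ, Finset.prod_ite, Finset.prod_const, hcard]
  rw [mul_comm]
  rfl

end TensorPow

section Lines

variable {n : ℕ}

def hammingWeight (n : ℕ) (x : F2 n) : Fin (n + 1) :=
  ⟨hammingNorm x, Nat.lt_succ_of_le (by simpa using hammingNorm_le_card_fintype (x := x))⟩

lemma tensorPow_eq_funLeft_hammingWeight (ψ : ZMod 2 → ℂ) :
    tensorPow ψ n = LinearMap.funLeft ℂ ℂ (hammingWeight n)
      (fun k : Fin (n + 1) => ψ 0 ^ (n - k) * ψ 1 ^ (k : ℕ)) := by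
  funext x
  exact tensorPow_apply_eq_pow_hammingNorm ψ x

lemma tensorPow_mem_span_tensorPow_qubit {t : Fin (n + 1) → ℂ} (ht : Function.Injective t)
    (φ : ZMod 2 → ℂ) :
    tensorPow φ n ∈ Submodule.span ℂ (Set.range fun j => tensorPow (qubit 1 (t j)) n) := by
  have hrows : Submodule.span ℂ (Set.range fun i => Matrix.vandermonde t i) = ⊤ :=
    (Matrix.linearIndependent_rows_of_det_ne_zero
      (Matrix.det_vandermonde_ne_zero_iff.mpr ht)).span_eq_top_of_card_eq_finrank (by simp)
  have hrange : (Set.range fun j => tensorPow (qubit 1 (t j)) n) =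
      LinearMap.funLeft ℂ ℂ (hammingWeight n) '' Set.range fun i => Matrix.vandermonde t i := by
    rw [← Set.range_comp]
    congr 1
    funext j
    rw [Function.comp_apply, tensorPow_eq_funLeft_hammingWeight]
    congr 1
    funext k
    simp [qubit, Matrix.vandermonde_apply]
  rw [hrange, ← Submodule.map_span, hrows, tensorPow_eq_funLeft_hammingWeight]
  exact Submodule.mem_map_of_mem Submodule.mem_top

lemma finite_setOf_tensorPow_qubit_mem {W : Submodule ℂ (F2 n → ℂ)} {φ : ZMod 2 → ℂ}
    (hφ : tensorPow φ n ∉ W) : {t : ℂ | tensorPow (qubit 1 t) n ∈ W}.Finite := by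
  by_contra hinf
  let t : Fin (n + 1) → ℂ := fun j => Set.Infinite.natEmbedding _ hinf j
  have ht : Function.Injective t := fun i j hij =>
    Fin.ext ((Set.Infinite.natEmbedding _ hinf).injective (Subtype.ext hij))
  refine hφ (Submodule.span_le.mpr ?_ (tensorPow_mem_span_tensorPow_qubit ht φ))
  rintro _ ⟨j, rfl⟩
  exact (Set.Infinite.natEmbedding _ hinf j).2

lemma finite_lines_tensorPow_mem {W : Submodule ℂ (F2 n → ℂ)} {φ : ZMod 2 → ℂ}
    (hφ : tensorPow φ n ∉ W) :
    {L : Submodule ℂ (ZMod 2 → ℂ) | ∃ ψ : ZMod 2 → ℂ, ψ ≠ 0 ∧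
      L = Submodule.span ℂ {ψ} ∧ tensorPow ψ n ∈ W}.Finite := by
  refine (((finite_setOf_tensorPow_qubit_mem hφ).image
    fun t => Submodule.span ℂ {qubit 1 t}).insert (Submodule.span ℂ {qubit 0 1})).subset ?_
  rintro L ⟨ψ, hψ, rfl, hψW⟩
  obtain ⟨c, hc, hψc | ⟨t, rfl⟩⟩ := exists_smul_qubit hψ
  · left
    rw [hψc, Submodule.span_singleton_smul_eq (IsUnit.mk0 c hc)]
  · right
    rw [tensorPow_smul, Submodule.smul_mem_iff _ (pow_ne_zero n hc)] at hψW
    exact ⟨t, hψW, (Submodule.span_singleton_smul_eq (IsUnit.mk0 c hc) _).symm⟩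

end Lines

section Stabilizer

variable {n : ℕ}

lemma IsRealStabilizerState.isStabilizerState {σ : F2 n → ℂ} (hσ : IsRealStabilizerState σ) :
    IsStabilizerState σ := by
  obtain ⟨A, q, hA, hq, hσA⟩ := hσ
  exact ⟨A, 0, q, hA, fun _ _ => (add_zero 0).symm, hq, fun x => by simp [hσA x]⟩

lemma isRealStabilizerState_single (a : F2 n) : IsRealStabilizerState (Pi.single a 1) := by
  refine ⟨{a}, 0, ⟨⟨a, rfl⟩, ?_⟩, ⟨rfl, fun _ _ _ => by simp⟩, fun x => by simp [Pi.single_apply]⟩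
  rintro x hx y hy z hz
  rw [Set.mem_singleton_iff] at hx hy hz ⊢
  subst hx hy hz
  funext i
  simp [CharTwo.add_self_eq_zero]

lemma span_setOf_isRealStabilizerState :
    Submodule.span ℂ {σ : F2 n → ℂ | IsRealStabilizerState σ} = ⊤ := by
  refine eq_top_iff.mpr ((Pi.basisFun ℂ (F2 n)).span_eq.ge.trans (Submodule.span_mono ?_))
  rintro _ ⟨a, rfl⟩
  simpa using isRealStabilizerState_single a

lemma span_setOf_isStabilizerState :
    Submodule.span ℂ {σ : F2 n → ℂ | IsStabilizerState σ} = ⊤ :=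
  eq_top_iff.mpr (span_setOf_isRealStabilizerState.ge.trans
    (Submodule.span_mono fun _ hσ => IsRealStabilizerState.isStabilizerState hσ))

lemma finite_setOf_isStabilizerState : {σ : F2 n → ℂ | IsStabilizerState σ}.Finite := by
  let V : Set ℂ :=
    insert 0 (Set.range fun p : ZMod 2 × ZMod 2 => Complex.I ^ p.1.val * (-1) ^ p.2.val)
  have hV : {σ : F2 n → ℂ | ∀ x, σ x ∈ V}.Finite :=
    Set.Finite.pi' fun _ => (Set.finite_range _).insert 0
  refine hV.subset ?_
  rintro σ ⟨A, l, q, -, -, -, hσ⟩ x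
  rw [hσ x]
  split_ifs
  · exact Or.inr ⟨(l x, q x), rfl⟩
  · exact Or.inl rfl

lemma finite_setOf_isRealStabilizerState : {σ : F2 n → ℂ | IsRealStabilizerState σ}.Finite :=
  finite_setOf_isStabilizerState.subset fun _ hσ => IsRealStabilizerState.isStabilizerState hσ

end Stabilizer

section Subgeneric

variable {n : ℕ} {S : Set (F2 n → ℂ)}

theorem finite_lines_rankWrt_lt (hS : S.Finite) (hspan : Submodule.span ℂ S = ⊤) {g : ℕ}
    {φ : ZMod 2 → ℂ} (hφ : g ≤ rankWrt ℂ S (tensorPow φ n)) :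
    {L : Submodule ℂ (ZMod 2 → ℂ) | ∃ ψ : ZMod 2 → ℂ, ψ ≠ 0 ∧
      L = Submodule.span ℂ {ψ} ∧ rankWrt ℂ S (tensorPow ψ n) < g}.Finite := by
  let small : Finset (Finset (F2 n → ℂ)) := hS.toFinset.powerset.filter (·.card < g)
  have hsmall : ∀ T ∈ small, ↑T ⊆ S ∧ T.card < g := fun T hT => by
    simpa [small, Set.subset_def] using hT
  refine (small.finite_toSet.biUnion fun T hT => finite_lines_tensorPow_mem
    (W := Submodule.span ℂ (T : Set (F2 n → ℂ))) (φ := φ) ?_).subset ?_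
  · intro hmem
    exact ((rankWrt_le_card_of_mem_span T (hsmall T hT).1 hmem).trans_lt
      ((hsmall T hT).2.trans_le hφ)).false
  · rintro L ⟨ψ, hψ, rfl, hlt⟩
    obtain ⟨T, hTS, hTcard, hTmem⟩ :=
      exists_finset_card_le_rankWrt (hspan ▸ Submodule.mem_top (x := tensorPow ψ n))
    refine Set.mem_biUnion (x := T) ?_ ⟨ψ, hψ, rfl, hTmem⟩
    simpa [small] using ⟨fun _ h => hTS h, hTcard.trans_lt hlt⟩

theorem finite_lines_rankWrt_lt_sSup (hS : S.Finite) (hspan : Submodule.span ℂ S = ⊤) :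
    {L : Submodule ℂ (ZMod 2 → ℂ) | ∃ ψ : ZMod 2 → ℂ, ψ ≠ 0 ∧ L = Submodule.span ℂ {ψ} ∧
      rankWrt ℂ S (tensorPow ψ n) <
        sSup {r | ∃ ψ : ZMod 2 → ℂ, ψ ≠ 0 ∧ rankWrt ℂ S (tensorPow ψ n) = r}}.Finite := by
  let ranks : Set ℕ := {r | ∃ ψ : ZMod 2 → ℂ, ψ ≠ 0 ∧ rankWrt ℂ S (tensorPow ψ n) = r}
  have hne : ranks.Nonempty := ⟨_, 1, one_ne_zero, rfl⟩
  have hbdd : BddAbove ranks := by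
    refine ⟨hS.toFinset.card, ?_⟩
    rintro _ ⟨ψ, -, rfl⟩
    exact rankWrt_le_card_of_mem_span _ (by simp) (by simp [hspan])
  obtain ⟨φ, -, hφ⟩ := Nat.sSup_mem hne hbdd
  exact finite_lines_rankWrt_lt hS hspan hφ.ge

end Subgeneric

theorem subgeneric_states_finite_general (n : ℕ) :
    {L : Submodule ℂ (ZMod 2 → ℂ) | ∃ ψ : ZMod 2 → ℂ, ψ ≠ 0 ∧
      L = Submodule.span ℂ {ψ} ∧ stabRank (tensorPow ψ n) < genStabRank n}.Finite ∧
    {L : Submodule ℂ (ZMod 2 → ℂ) | ∃ ψ : ZMod 2 → ℂ, ψ ≠ 0 ∧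
      L = Submodule.span ℂ {ψ} ∧ realStabRank (tensorPow ψ n) < genRealStabRank n}.Finite :=
  ⟨finite_lines_rankWrt_lt_sSup finite_setOf_isStabilizerState span_setOf_isStabilizerState,
    finite_lines_rankWrt_lt_sSup finite_setOf_isRealStabilizerState
      span_setOf_isRealStabilizerState⟩

/-- For every `n ≥ 1`, the set of one-dimensional subspaces `ℂ·ψ` of `ℂ²` with
`χ(ψ^{⊗n}) < χ_n` is finite, and the set of one-dimensional subspaces `ℂ·ψ` with
`χℝ(ψ^{⊗n}) < χ_nℝ` is finite. -/
theorem subgeneric_states_finite (n : ℕ) (hn : 1 ≤ n) :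
    {L : Submodule ℂ (ZMod 2 → ℂ) | ∃ ψ : ZMod 2 → ℂ, ψ ≠ 0 ∧
      L = Submodule.span ℂ {ψ} ∧ stabRank (tensorPow ψ n) < genStabRank n}.Finite ∧
    {L : Submodule ℂ (ZMod 2 → ℂ) | ∃ ψ : ZMod 2 → ℂ, ψ ≠ 0 ∧
      L = Submodule.span ℂ {ψ} ∧ realStabRank (tensorPow ψ n) < genRealStabRank n}.Finite :=
  subgeneric_states_finite_general n

end StabPaper
end
end
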